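/- Let A be a real 3×3 matrix, g ∈ ℝ³, and let τ₁, τ₂ ∈ ℝ³ be linearly independent. Set ν = (τ₁ × τ₂)/‖τ₁ × τ₂‖, P = I₃ − ν νᵀ, and for t near 0 define n(t) = (((I + tA)τ₁) × ((I + tA)τ₂)) / ‖((I + tA)τ₁) × ((I + tA)τ₂)‖, P(t) = I₃ − n(t) n(t)ᵀ, and G(t) = P(t) ((I + tA)ᵀ)⁻¹ g. Then G is differentiable at t = 0, G(0) = P g, and G′(0) = −P Aᵀ (P g) + ⟨P g, P Aᵀ ν⟩ ν. -/

import Mathlib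

/-!
Write `c(t) = (I + tA)τ₁ × (I + tA)τ₂`, so that `P(t)` is the projection `perpProj (c t)` onto
`c(t)^⊥` and `G(t) = perpProj (c t) (w t)` with `w(t) = (I + tAᵀ)⁻¹ g`. Since `perpProj c` does not
change when `c` is rescaled, its derivative sees `c'(0)` only through `P c'(0)`; the cross-product
identity `Aa × b + a × Ab = tr(A) (a × b) - Aᵀ (a × b)` gives `P c'(0) = -P Aᵀ c(0)`. Together
with `w'(0) = -Aᵀ g` the product rule yields the formula.
-/

open Matrix

section Calculus

variable {𝕜 : Type*} [NontriviallyNormedField 𝕜]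

theorem LinearMap.hasDerivAt_bilinear [CompleteSpace 𝕜] {E F G : Type*}
    [NormedAddCommGroup E] [NormedSpace 𝕜 E] [FiniteDimensional 𝕜 E]
    [NormedAddCommGroup F] [NormedSpace 𝕜 F] [FiniteDimensional 𝕜 F]
    [NormedAddCommGroup G] [NormedSpace 𝕜 G]
    (B : E →ₗ[𝕜] F →ₗ[𝕜] G) {u : 𝕜 → E} {v : 𝕜 → F} {u' : E} {v' : F} {t : 𝕜}
    (hu : HasDerivAt u u' t) (hv : HasDerivAt v v' t) :
    HasDerivAt (fun s => B (u s) (v s)) (B u' (v t) + B (u t) v') t := by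
  let Bc : E →L[𝕜] F →L[𝕜] G :=
    LinearMap.toContinuousLinearMap (LinearMap.toContinuousLinearMap.toLinearMap ∘ₗ B)
  simpa [Bc, add_comm] using Bc.hasDerivAt_of_bilinear (fun _ => hu) (fun _ => hv)

variable {ι : Type*} [Fintype ι]

theorem HasDerivAt.dotProduct [CompleteSpace 𝕜] {u v : 𝕜 → ι → 𝕜} {u' v' : ι → 𝕜} {t : 𝕜}
    (hu : HasDerivAt u u' t) (hv : HasDerivAt v v' t) :
    HasDerivAt (fun s => u s ⬝ᵥ v s) (u' ⬝ᵥ v t + u t ⬝ᵥ v') t :=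
  (dotProductBilin 𝕜 𝕜).hasDerivAt_bilinear hu hv

theorem HasDerivAt.crossProduct [CompleteSpace 𝕜] {u v : 𝕜 → Fin 3 → 𝕜} {u' v' : Fin 3 → 𝕜}
    {t : 𝕜}
    (hu : HasDerivAt u u' t) (hv : HasDerivAt v v' t) :
    HasDerivAt (fun s => u s ⨯₃ v s) (u' ⨯₃ v t + u t ⨯₃ v') t :=
  LinearMap.hasDerivAt_bilinear _root_.crossProduct hu hv

theorem hasDerivAt_ringInverse_one_add_smul {R : Type*} [NormedRing R] [NormedAlgebra 𝕜 R]
    [HasSummableGeomSeries R] (a : R) :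
    HasDerivAt (fun t : 𝕜 => Ring.inverse (1 + t • a)) (-a) 0 := by
  have hline : HasDerivAt (fun t : 𝕜 => 1 + t • a) a 0 := by
    simpa using ((hasDerivAt_id (0 : 𝕜)).smul_const a).const_add 1
  have hinv : HasFDerivAt Ring.inverse (-ContinuousLinearMap.mulLeftRight 𝕜 R 1 1)
      (1 + (0 : 𝕜) • a) := by
    simpa using hasFDerivAt_ringInverse (𝕜 := 𝕜) (1 : Rˣ)
  simpa [Function.comp_def] using hinv.comp_hasDerivAt (0 : 𝕜) hline

end Calculus

section PerpProj

variable {ι K : Type*} [Fintype ι]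

theorem inv_sqrt_dotProduct_self_mul_self (v : ι → ℝ) :
    (√(v ⬝ᵥ v))⁻¹ * (√(v ⬝ᵥ v))⁻¹ = (v ⬝ᵥ v)⁻¹ := by
  rw [← mul_inv, Real.mul_self_sqrt (by simpa using dotProduct_self_star_nonneg v)]

theorem dotProduct_mulVec_normalize_smul_normalize (M : Matrix ι ι ℝ) (x v : ι → ℝ) :
    (x ⬝ᵥ M *ᵥ ((√(v ⬝ᵥ v))⁻¹ • v)) • ((√(v ⬝ᵥ v))⁻¹ • v) = ((x ⬝ᵥ M *ᵥ v) / (v ⬝ᵥ v)) • v := by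
  rw [mulVec_smul, dotProduct_smul, smul_smul, smul_eq_mul, mul_right_comm,
    inv_sqrt_dotProduct_self_mul_self, div_eq_inv_mul]

variable [DecidableEq ι]

def perpProj [Field K] (v : ι → K) : Matrix ι ι K :=
  1 - (v ⬝ᵥ v)⁻¹ • vecMulVec v v

section Field

variable [Field K] {v : ι → K}

theorem perpProj_mulVec (v x : ι → K) :
    perpProj v *ᵥ x = x - ((v ⬝ᵥ x) / (v ⬝ᵥ v)) • v := by
  rw [perpProj, sub_mulVec, one_mulVec, smul_mulVec, vecMulVec_mulVec, op_smul_eq_smul,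
    smul_smul, div_eq_inv_mul]

theorem perpProj_mulVec_self (hv : v ⬝ᵥ v ≠ 0) : perpProj v *ᵥ v = 0 := by
  rw [perpProj_mulVec, div_self hv, one_smul, sub_self]

theorem dotProduct_perpProj_mulVec (hv : v ⬝ᵥ v ≠ 0) (x : ι → K) :
    v ⬝ᵥ perpProj v *ᵥ x = 0 := by
  rw [perpProj_mulVec, dotProduct_sub, dotProduct_smul, smul_eq_mul, div_mul_cancel₀ _ hv,
    sub_self]

theorem perpProj_mulVec_dotProduct_perpProj_mulVec (hv : v ⬝ᵥ v ≠ 0) (x y : ι → K) :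
    perpProj v *ᵥ x ⬝ᵥ perpProj v *ᵥ y = x ⬝ᵥ perpProj v *ᵥ y := by
  rw [perpProj_mulVec v x, sub_dotProduct, smul_dotProduct, dotProduct_perpProj_mulVec hv,
    smul_zero, sub_zero]

end Field

theorem one_sub_vecMulVec_normalize_eq_perpProj (v : ι → ℝ) :
    1 - vecMulVec ((√(v ⬝ᵥ v))⁻¹ • v) ((√(v ⬝ᵥ v))⁻¹ • v) = perpProj v := by
  rw [perpProj, smul_vecMulVec, vecMulVec_smul, smul_smul, inv_sqrt_dotProduct_self_mul_self]

theorem HasDerivAt.perpProj_mulVec {𝕜 : Type*} [NontriviallyNormedField 𝕜]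
    [CompleteSpace 𝕜] {c x : 𝕜 → ι → 𝕜} {c' x' : ι → 𝕜} {t : 𝕜}
    (hc : HasDerivAt c c' t) (hx : HasDerivAt x x' t) (hct : c t ⬝ᵥ c t ≠ 0) :
    HasDerivAt (fun s => perpProj (c s) *ᵥ x s)
      (perpProj (c t) *ᵥ x' - ((perpProj (c t) *ᵥ c' ⬝ᵥ x t) / (c t ⬝ᵥ c t)) • c t -
        ((c t ⬝ᵥ x t) / (c t ⬝ᵥ c t)) • perpProj (c t) *ᵥ c') t := by
  simp_rw [_root_.perpProj_mulVec]
  refine (hx.sub (((hc.dotProduct hx).div (hc.dotProduct hc) hct).smul hc)).congr_deriv ?_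
  funext i
  simp only [Pi.sub_apply, Pi.add_apply, Pi.smul_apply, Pi.div_apply, smul_eq_mul,
    sub_dotProduct, smul_dotProduct, dotProduct_comm c' (c t)]
  field_simp
  ring

end PerpProj

theorem hasDerivAt_one_add_smul_mulVec {𝕜 : Type*} [NontriviallyNormedField 𝕜] {n : Type*}
    [Fintype n] [DecidableEq n] (B : Matrix n n 𝕜) (x : n → 𝕜) (t : 𝕜) :
    HasDerivAt (fun s : 𝕜 => (1 + s • B) *ᵥ x) (B *ᵥ x) t := by
  simp only [add_mulVec, one_mulVec, smul_mulVec]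
  simpa using ((hasDerivAt_id t).smul_const (B *ᵥ x)).const_add x

theorem cross_mulVec_add_cross_mulVec {R : Type*} [CommRing R] (A : Matrix (Fin 3) (Fin 3) R)
    (a b : Fin 3 → R) :
    (A *ᵥ a) ⨯₃ b + a ⨯₃ (A *ᵥ b) = A.trace • a ⨯₃ b - Aᵀ *ᵥ (a ⨯₃ b) := by
  funext i
  fin_cases i <;>
    simp [cross_apply, mulVec, dotProduct, trace, Fin.sum_univ_three] <;> ring

theorem hasDerivAt_cross_one_add_smul_mulVec {𝕜 : Type*} [NontriviallyNormedField 𝕜]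
    [CompleteSpace 𝕜] (A : Matrix (Fin 3) (Fin 3) 𝕜) (a b : Fin 3 → 𝕜) :
    HasDerivAt (fun t : 𝕜 => ((1 + t • A) *ᵥ a) ⨯₃ ((1 + t • A) *ᵥ b))
      (A.trace • a ⨯₃ b - Aᵀ *ᵥ (a ⨯₃ b)) 0 := by
  rw [← cross_mulVec_add_cross_mulVec]
  simpa using (hasDerivAt_one_add_smul_mulVec A a 0).crossProduct
    (hasDerivAt_one_add_smul_mulVec A b 0)

section MatrixInverse

attribute [local instance] Matrix.frobeniusNormedRing Matrix.frobeniusNormedAlgebra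

theorem hasDerivAt_inv_one_add_smul_mulVec {𝕜 : Type*} [RCLike 𝕜] {n : Type*} [Fintype n]
    [DecidableEq n] (B : Matrix n n 𝕜) (x : n → 𝕜) :
    HasDerivAt (fun t : 𝕜 => (1 + t • B)⁻¹ *ᵥ x) (-(B *ᵥ x)) 0 := by
  simp only [nonsing_inv_eq_ringInverse]
  simpa using (mulVecBilin 𝕜 𝕜).hasDerivAt_bilinear (hasDerivAt_ringInverse_one_add_smul B)
    (hasDerivAt_const (0 : 𝕜) x)

end MatrixInverse

open Matrix in
/-- Pointwise (d = 3) form of Theorem (nabla) of the paper at `r = 0`: the transported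
tangential gradient `G(t) = P(t)((I+tA)ᵀ)⁻¹g` satisfies `G(0) = Pg` and
`G′(0) = −PAᵀ(Pg) + ⟨Pg, PAᵀν⟩ν`. -/
theorem stmt13 (A : Matrix (Fin 3) (Fin 3) ℝ) (g : Fin 3 → ℝ)
    (τ₁ τ₂ : Fin 3 → ℝ) (hτ : LinearIndependent ℝ ![τ₁, τ₂])
    (ν : Fin 3 → ℝ)
    (hν : ν = (Real.sqrt (crossProduct τ₁ τ₂ ⬝ᵥ crossProduct τ₁ τ₂))⁻¹ • crossProduct τ₁ τ₂)
    (P : Matrix (Fin 3) (Fin 3) ℝ) (hP : P = 1 - vecMulVec ν ν)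
    (n : ℝ → Fin 3 → ℝ)
    (hn : ∀ t : ℝ, n t =
      (Real.sqrt (crossProduct ((1 + t • A).mulVec τ₁) ((1 + t • A).mulVec τ₂) ⬝ᵥ
        crossProduct ((1 + t • A).mulVec τ₁) ((1 + t • A).mulVec τ₂)))⁻¹ •
        crossProduct ((1 + t • A).mulVec τ₁) ((1 + t • A).mulVec τ₂))
    (Pt : ℝ → Matrix (Fin 3) (Fin 3) ℝ) (hPt : ∀ t, Pt t = 1 - vecMulVec (n t) (n t))
    (G : ℝ → Fin 3 → ℝ)
    (hG : ∀ t : ℝ, G t = (Pt t).mulVec ((((1 + t • A)ᵀ)⁻¹).mulVec g)) :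
    G 0 = P.mulVec g ∧
      HasDerivAt G
        (-((P * Aᵀ).mulVec (P.mulVec g)) + (P.mulVec g ⬝ᵥ (P * Aᵀ).mulVec ν) • ν) 0 := by
  have hQ : τ₁ ⨯₃ τ₂ ⬝ᵥ τ₁ ⨯₃ τ₂ ≠ 0 :=
    dotProduct_self_eq_zero.not.mpr (crossProduct_ne_zero_iff_linearIndependent.mpr hτ)
  have hG' : G = fun t =>
      perpProj (((1 + t • A) *ᵥ τ₁) ⨯₃ ((1 + t • A) *ᵥ τ₂)) *ᵥ ((1 + t • Aᵀ)⁻¹ *ᵥ g) := by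
    funext t
    rw [hG, hPt, hn, one_sub_vecMulVec_normalize_eq_perpProj, transpose_add, transpose_one,
      transpose_smul]
  have hGD := (hasDerivAt_cross_one_add_smul_mulVec A τ₁ τ₂).perpProj_mulVec
    (hasDerivAt_inv_one_add_smul_mulVec Aᵀ g) (by simpa using hQ)
  simp only [zero_smul, add_zero, inv_one, one_mulVec] at hGD
  set c₀ := τ₁ ⨯₃ τ₂
  obtain rfl : P = perpProj c₀ := by rw [hP, hν, one_sub_vecMulVec_normalize_eq_perpProj]
  set P := perpProj c₀
  refine ⟨by simp [hG', P, c₀], ?_⟩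
  rw [hG']
  convert hGD using 1
  have hPe : P *ᵥ (A.trace • c₀ - Aᵀ *ᵥ c₀) = -(P *ᵥ (Aᵀ *ᵥ c₀)) := by
    rw [mulVec_sub, mulVec_smul, perpProj_mulVec_self hQ, smul_zero, zero_sub]
  have hPAPg : (P * Aᵀ) *ᵥ (P *ᵥ g) =
      P *ᵥ (Aᵀ *ᵥ g) - ((c₀ ⬝ᵥ g) / (c₀ ⬝ᵥ c₀)) • P *ᵥ (Aᵀ *ᵥ c₀) := by
    rw [← mulVec_mulVec, perpProj_mulVec c₀ g, mulVec_sub, mulVec_smul, mulVec_sub, mulVec_smul]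
  rw [hPAPg, hν, dotProduct_mulVec_normalize_smul_normalize, ← mulVec_mulVec,
    perpProj_mulVec_dotProduct_perpProj_mulVec hQ, hPe, mulVec_neg, neg_dotProduct,
    dotProduct_comm g]
  module
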